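/- arXiv:0808.0378 — 3 statements merged into one kernel-verified Lean document; each statement's English description precedes it below -/
import Mathlib

section
/- Let C = (φ,Φ) be a skew-evolution semiflow with exponential decay. If there exist μ > 0 and (a_n)_{n≥0} with a_n ≥ 1 such that ‖v‖ ≤ a_m e^{-μ(m-n₀)} ‖Φ(m,n₀,x)v‖ for all naturals m ≥ n₀ and all (x,v), and moreover the functions M, ω of the exponential decay are constant, then C is exponentially instable: there exist a function N : ℝ₊ → (0,∞) and ν > 0 with N(t)‖Φ(t,t₀,x)v‖ ≥ e^{ν(t-t₀)} ‖v‖ for all reals t ≥ t₀ ≥ 0 and all (x,v). -/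
open Real Finset

/-- An evolution semiflow on `X`. -/
def IsEvolutionSemiflow {X : Type*} (φ : ℝ → ℝ → X → X) : Prop :=
  (∀ t x, 0 ≤ t → φ t t x = x) ∧
  ∀ t s t₀ x, 0 ≤ t₀ → t₀ ≤ s → s ≤ t → φ t s (φ s t₀ x) = φ t t₀ x

/-- An evolution cocycle over an evolution semiflow `φ`. -/
def IsEvolutionCocycle {X V : Type*} [NormedAddCommGroup V] [NormedSpace ℝ V]
    (φ : ℝ → ℝ → X → X) (Φ : ℝ → ℝ → X → (V →L[ℝ] V)) : Prop :=
  (∀ t x, 0 ≤ t → Φ t t x = ContinuousLinearMap.id ℝ V) ∧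
  ∀ t s t₀ x, 0 ≤ t₀ → t₀ ≤ s → s ≤ t →
    (Φ t s (φ s t₀ x)).comp (Φ s t₀ x) = Φ t t₀ x

theorem discrete_implies_exp_instable
    {X V : Type*} [MetricSpace X] [NormedAddCommGroup V] [NormedSpace ℝ V] [CompleteSpace V]
    (φ : ℝ → ℝ → X → X) (Φ : ℝ → ℝ → X → (V →L[ℝ] V))
    (hφ : IsEvolutionSemiflow φ) (hΦ : IsEvolutionCocycle φ Φ)
    (M ω : ℝ) (hM : 0 < M) (hω : 0 < ω)
    (hdecay : ∀ t s t₀ : ℝ, 0 ≤ t₀ → t₀ ≤ s → s ≤ t → ∀ (x : X) (v : V),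
      ‖Φ s t₀ x v‖ ≤ M * Real.exp (ω * (t - s)) * ‖Φ t t₀ x v‖)
    (hdisc : ∃ μ > (0:ℝ), ∃ a : ℕ → ℝ, (∀ n, 1 ≤ a n) ∧
      ∀ m n₀ : ℕ, n₀ ≤ m → ∀ (x : X) (v : V),
        ‖v‖ ≤ a m * Real.exp (-μ * ((m : ℝ) - (n₀ : ℝ))) * ‖Φ m n₀ x v‖) :
    ∃ N : ℝ → ℝ, (∀ t, 0 < N t) ∧ ∃ ν > (0:ℝ),
      ∀ t t₀ : ℝ, 0 ≤ t₀ → t₀ ≤ t → ∀ (x : X) (v : V),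
        Real.exp (ν * (t - t₀)) * ‖v‖ ≤ N t * ‖Φ t t₀ x v‖ := by
  obtain ⟨μ, hμ, a, ha1, hdisc⟩ := hdisc
  refine ⟨fun t => M ^ 2 * Real.exp (2 * ω + 2 * μ) * a ⌊t⌋₊ + M * Real.exp (2 * ω + 2 * μ),
    fun t => by have := ha1 ⌊t⌋₊; positivity, μ, hμ, ?_⟩
  · intro t t₀ ht₀ htt x v
    have hP : (0:ℝ) ≤ ‖Φ t t₀ x v‖ := norm_nonneg _
    have ham : (1:ℝ) ≤ a ⌊t⌋₊ := ha1 _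
    by_cases hcase : t - t₀ ≤ 2
    · -- short interval: use decay alone
      have hA := hdecay t t₀ t₀ ht₀ le_rfl htt x v
      rw [hΦ.1 t₀ x ht₀] at hA
      simp only [ContinuousLinearMap.id_apply] at hA
      have h1 : Real.exp (μ * (t - t₀)) ≤ Real.exp (2 * μ) := by
        apply Real.exp_le_exp.mpr; nlinarith
      have h2 : Real.exp (ω * (t - t₀)) ≤ Real.exp (2 * ω) := by
        apply Real.exp_le_exp.mpr; nlinarith
      have key : Real.exp (μ * (t - t₀)) * ‖v‖ ≤
          M * Real.exp (2 * ω + 2 * μ) * ‖Φ t t₀ x v‖ := by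
        calc Real.exp (μ * (t - t₀)) * ‖v‖
            ≤ Real.exp (μ * (t - t₀)) * (M * Real.exp (ω * (t - t₀)) * ‖Φ t t₀ x v‖) := by
              exact mul_le_mul_of_nonneg_left hA (Real.exp_nonneg _)
          _ = (Real.exp (μ * (t - t₀)) * Real.exp (ω * (t - t₀))) * (M * ‖Φ t t₀ x v‖) := by
              ring
          _ ≤ (Real.exp (2 * μ) * Real.exp (2 * ω)) * (M * ‖Φ t t₀ x v‖) := by
              apply mul_le_mul_of_nonneg_right _ (by positivity)
              exact mul_le_mul h1 h2 (Real.exp_nonneg _) (Real.exp_nonneg _)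
          _ = M * Real.exp (2 * ω + 2 * μ) * ‖Φ t t₀ x v‖ := by
              rw [← Real.exp_add]; ring
      have hextra : 0 ≤ M ^ 2 * Real.exp (2 * ω + 2 * μ) * a ⌊t⌋₊ * ‖Φ t t₀ x v‖ := by
        positivity
      show Real.exp (μ * (t - t₀)) * ‖v‖ ≤
        (M ^ 2 * Real.exp (2 * ω + 2 * μ) * a ⌊t⌋₊ + M * Real.exp (2 * ω + 2 * μ)) *
          ‖Φ t t₀ x v‖
      nlinarith [key]
    · -- long interval: go through integer times
      push_neg at hcase
      set n₀ : ℕ := ⌈t₀⌉₊ with hn₀def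
      set m : ℕ := ⌊t⌋₊ with hmdef
      have h1 : t₀ ≤ (n₀ : ℝ) := Nat.le_ceil t₀
      have h2 : (n₀ : ℝ) < t₀ + 1 := Nat.ceil_lt_add_one ht₀
      have ht0 : 0 ≤ t := le_trans ht₀ htt
      have h3 : (m : ℝ) ≤ t := Nat.floor_le ht0
      have h4 : t < (m : ℝ) + 1 := Nat.lt_floor_add_one t
      have hnmR : (n₀ : ℝ) ≤ (m : ℝ) := by linarith
      have hnm : n₀ ≤ m := by exact_mod_cast hnmR
      -- step A : decay from t₀ to n₀
      have hA := hdecay (n₀ : ℝ) t₀ t₀ ht₀ le_rfl h1 x v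
      rw [hΦ.1 t₀ x ht₀] at hA
      simp only [ContinuousLinearMap.id_apply] at hA
      -- step B : discrete hypothesis from n₀ to m
      have hB := hdisc m n₀ hnm (φ (n₀ : ℝ) t₀ x) (Φ (n₀ : ℝ) t₀ x v)
      have hcoc : Φ (m : ℝ) (n₀ : ℝ) (φ (n₀ : ℝ) t₀ x) (Φ (n₀ : ℝ) t₀ x v)
          = Φ (m : ℝ) t₀ x v := by
        rw [← hΦ.2 (m : ℝ) (n₀ : ℝ) t₀ x ht₀ h1 hnmR]
        rfl
      rw [hcoc] at hB
      -- step C : decay from m to t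
      have hC := hdecay t (m : ℝ) t₀ ht₀ (le_trans h1 hnmR) h3 x v
      -- combine
      have hchain : ‖v‖ ≤ M * Real.exp (ω * ((n₀ : ℝ) - t₀)) *
          (a m * Real.exp (-μ * ((m : ℝ) - (n₀ : ℝ))) *
            (M * Real.exp (ω * (t - (m : ℝ))) * ‖Φ t t₀ x v‖)) := by
        calc ‖v‖ ≤ M * Real.exp (ω * ((n₀ : ℝ) - t₀)) * ‖Φ (n₀ : ℝ) t₀ x v‖ := hA
          _ ≤ M * Real.exp (ω * ((n₀ : ℝ) - t₀)) *
              (a m * Real.exp (-μ * ((m : ℝ) - (n₀ : ℝ))) * ‖Φ (m : ℝ) t₀ x v‖) := by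
            exact mul_le_mul_of_nonneg_left hB (by positivity)
          _ ≤ _ := by
            apply mul_le_mul_of_nonneg_left _ (by positivity)
            apply mul_le_mul_of_nonneg_left hC
            have := ha1 m
            positivity
      have hexp : Real.exp (μ * (t - t₀)) * Real.exp (ω * ((n₀ : ℝ) - t₀)) *
          Real.exp (-μ * ((m : ℝ) - (n₀ : ℝ))) * Real.exp (ω * (t - (m : ℝ)))
          ≤ Real.exp (2 * ω + 2 * μ) := by
        rw [← Real.exp_add, ← Real.exp_add, ← Real.exp_add]
        apply Real.exp_le_exp.mpr
        nlinarith [mul_le_mul_of_nonneg_left (show (n₀:ℝ) - t₀ ≤ 1 by linarith) hω.le,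
          mul_le_mul_of_nonneg_left (show t - (m:ℝ) ≤ 1 by linarith) hω.le,
          mul_le_mul_of_nonneg_left
            (show t - t₀ - ((m:ℝ) - (n₀:ℝ)) ≤ 2 by linarith) hμ.le]
      have key : Real.exp (μ * (t - t₀)) * ‖v‖ ≤
          M ^ 2 * Real.exp (2 * ω + 2 * μ) * a m * ‖Φ t t₀ x v‖ := by
        calc Real.exp (μ * (t - t₀)) * ‖v‖
            ≤ Real.exp (μ * (t - t₀)) * (M * Real.exp (ω * ((n₀ : ℝ) - t₀)) *
              (a m * Real.exp (-μ * ((m : ℝ) - (n₀ : ℝ))) *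
                (M * Real.exp (ω * (t - (m : ℝ))) * ‖Φ t t₀ x v‖))) :=
              mul_le_mul_of_nonneg_left hchain (Real.exp_nonneg _)
          _ = (Real.exp (μ * (t - t₀)) * Real.exp (ω * ((n₀ : ℝ) - t₀)) *
              Real.exp (-μ * ((m : ℝ) - (n₀ : ℝ))) * Real.exp (ω * (t - (m : ℝ)))) *
              (M * M * a m * ‖Φ t t₀ x v‖) := by ring
          _ ≤ Real.exp (2 * ω + 2 * μ) * (M * M * a m * ‖Φ t t₀ x v‖) := by
              apply mul_le_mul_of_nonneg_right hexp
              have := ha1 m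
              positivity
          _ = M ^ 2 * Real.exp (2 * ω + 2 * μ) * a m * ‖Φ t t₀ x v‖ := by ring
      have hextra : 0 ≤ M * Real.exp (2 * ω + 2 * μ) * ‖Φ t t₀ x v‖ := by positivity
      show Real.exp (μ * (t - t₀)) * ‖v‖ ≤
        (M ^ 2 * Real.exp (2 * ω + 2 * μ) * a ⌊t⌋₊ + M * Real.exp (2 * ω + 2 * μ)) *
          ‖Φ t t₀ x v‖
      nlinarith [key]
end

section
/- A skew-evolution semiflow C = (φ,Φ) satisfies the discrete exponential instability property (there exist ν > 0 and (a_n) with a_n ≥ 1 such that ‖Φ(n,n₀,x)v‖ ≤ a_m e^{-ν(m-n)} ‖Φ(m,n₀,x)v‖ for all naturals m ≥ n ≥ n₀ and all (x,v)) if and only if there exist a nondecreasing function R : ℝ₊ → ℝ₊ with R(0) = 0 and R(t) > 0 for t > 0, a constant ρ < 0, and a sequence (α_n) with α_n ≥ 1 such that Σ_{k=n}^{m} R(e^{-ρ(m-k)} ‖Φ(k,n,x)v‖) ≤ R(α_m ‖Φ(m,n,x)v‖) for all naturals m ≥ n and all (x,v) ∈ X × V. -/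
/-!
For `⇒` take `R = id` and `ρ = -ν/2`: instability with `n₀ = n` bounds the `k`-th term of the
sum by `a m e^{-ν(m-k)/2} ‖Φ(m,n,x)v‖`, and the geometric series is absorbed into `α m`.
For `⇐` take `ν = -ρ` and apply the sum inequality at `(φ(n,n₀,x), Φ(n,n₀,x)v)`, which the
cocycle identity turns into an inequality about `u k = ‖Φ(k,n₀,x)v‖`. For `n < m`, keeping only
the terms `k = n` and `k = m` gives `R s + R (u m) ≤ R (α m * u m)` with `s = e^{-ρ(m-n)} u n`;
were `s > α m * u m`, monotonicity would force `R (u m) ≤ 0`, hence `u m = 0` and `R s ≤ 0`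
although `s > 0`.
-/

open Real Finset

lemma IsEvolutionCocycle.apply_apply {X V : Type*} [NormedAddCommGroup V] [NormedSpace ℝ V]
    {φ : ℝ → ℝ → X → X} {Φ : ℝ → ℝ → X → (V →L[ℝ] V)} (hΦ : IsEvolutionCocycle φ Φ)
    {t s t₀ : ℝ} (h₀ : 0 ≤ t₀) (ht₀s : t₀ ≤ s) (hst : s ≤ t) (x : X) (v : V) :
    Φ t s (φ s t₀ x) (Φ s t₀ x v) = Φ t t₀ x v := by
  rw [← hΦ.2 t s t₀ x h₀ ht₀s hst, ContinuousLinearMap.comp_apply]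

lemma sum_Icc_exp_neg_mul_sub_le {δ : ℝ} (hδ : 0 < δ) (n m : ℕ) :
    ∑ k ∈ Icc n m, exp (-δ * (m - k)) ≤ (1 - exp (-δ))⁻¹ := by
  set r := exp (-δ)
  calc ∑ k ∈ Icc n m, exp (-δ * (m - k))
      = ∑ k ∈ Icc n m, r ^ (m - k) := sum_congr rfl fun k hk => by
        rw [← exp_nat_mul, Nat.cast_sub (mem_Icc.1 hk).2, mul_comm]
    _ ≤ ∑ k ∈ range (m + 1), r ^ (m - k) :=
        sum_le_sum_of_subset_of_nonneg (fun k hk => by simp at hk ⊢; omega)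
          fun _ _ _ => by positivity
    _ = ∑ j ∈ range (m + 1), r ^ j := by
        simpa using sum_range_reflect (fun j => r ^ j) (m + 1)
    _ ≤ (1 - r)⁻¹ := by
        simpa using geom_sum_Ico_le_of_lt_one (m := 0) (n := m + 1) (exp_pos _).le
          (exp_lt_one_iff.2 (neg_neg_of_pos hδ))

lemma sum_exp_mul_le_of_le_mul_exp {μ ν A : ℝ} (hμν : μ < ν) (hA : 0 ≤ A) {u : ℕ → ℝ}
    {n m : ℕ} (hum : 0 ≤ u m) (h : ∀ k ∈ Icc n m, u k ≤ A * exp (-ν * (m - k)) * u m) :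
    ∑ k ∈ Icc n m, exp (μ * (m - k)) * u k ≤ A * (1 - exp (μ - ν))⁻¹ * u m :=
  calc ∑ k ∈ Icc n m, exp (μ * (m - k)) * u k
      ≤ ∑ k ∈ Icc n m, A * u m * exp (-(ν - μ) * (m - k)) := sum_le_sum fun k hk => calc
        exp (μ * (m - k)) * u k ≤ exp (μ * (m - k)) * (A * exp (-ν * (m - k)) * u m) := by
          gcongr; exact h k hk
        _ = A * u m * exp (-(ν - μ) * (m - k)) := by
          rw [show -(ν - μ) * (m - k) = μ * (m - k) + -ν * (m - k) by ring, exp_add]; ring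
    _ = A * u m * ∑ k ∈ Icc n m, exp (-(ν - μ) * (m - k)) := (mul_sum ..).symm
    _ ≤ A * u m * (1 - exp (-(ν - μ)))⁻¹ := by
        gcongr; exact sum_Icc_exp_neg_mul_sub_le (sub_pos.2 hμν) n m
    _ = A * (1 - exp (μ - ν))⁻¹ * u m := by rw [neg_sub]; ring

lemma one_le_inv_one_sub_exp {t : ℝ} (ht : t < 0) : 1 ≤ (1 - exp t)⁻¹ :=
  (one_le_inv₀ (sub_pos.2 (exp_lt_one_iff.2 ht))).2 (sub_le_self _ (exp_pos t).le)

lemma le_mul_of_map_add_map_le_map_mul {R : ℝ → ℝ} (hR : Monotone R)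
    (hRpos : ∀ t > 0, 0 < R t) {s t c : ℝ} (ht : 0 ≤ t) (h : R s + R t ≤ R (c * t)) :
    s ≤ c * t := by
  by_contra! hlt
  have hRt : R t ≤ 0 := by linarith [hR hlt.le]
  rcases ht.eq_or_lt with rfl | htpos
  · rw [mul_zero] at hlt h
    linarith [hRpos s hlt]
  · linarith [hRpos t htpos]

lemma le_mul_exp_of_sum_map_le {R : ℝ → ℝ} (hR : Monotone R) (hR0 : R 0 = 0)
    (hRpos : ∀ t > 0, 0 < R t) {ν c : ℝ} (hc : 1 ≤ c) {u : ℕ → ℝ} (hu : ∀ k, 0 ≤ u k)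
    {n m : ℕ} (hnm : n ≤ m) (h : ∑ k ∈ Icc n m, R (exp (ν * (m - k)) * u k) ≤ R (c * u m)) :
    u n ≤ c * exp (-ν * (m - n)) * u m := by
  suffices hscaled : exp (ν * (m - n)) * u n ≤ c * u m by
    calc u n = exp (-ν * (m - n)) * (exp (ν * (m - n)) * u n) := by
          rw [← mul_assoc, ← exp_add, neg_mul, neg_add_cancel, exp_zero, one_mul]
      _ ≤ exp (-ν * (m - n)) * (c * u m) := by gcongr
      _ = c * exp (-ν * (m - n)) * u m := by ring
  rcases hnm.eq_or_lt with rfl | hlt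
  · simpa using le_mul_of_one_le_left (hu n) hc
  have hterm : ∀ k : ℕ, 0 ≤ R (exp (ν * (m - k)) * u k) := fun k =>
    hR0 ▸ hR (mul_nonneg (exp_pos _).le (hu k))
  refine le_mul_of_map_add_map_le_map_mul hR hRpos (hu m) ?_
  calc R (exp (ν * (m - n)) * u n) + R (u m)
      = ∑ k ∈ {n, m}, R (exp (ν * (m - k)) * u k) := by simp [sum_pair hlt.ne]
    _ ≤ ∑ k ∈ Icc n m, R (exp (ν * (m - k)) * u k) :=
        sum_le_sum_of_subset_of_nonneg (by simp [insert_subset_iff, hnm])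
          fun k _ _ => hterm k
    _ ≤ R (c * u m) := h

theorem discrete_instable_iff_R_sum_general
    {X V : Type*} [NormedAddCommGroup V] [NormedSpace ℝ V]
    (φ : ℝ → ℝ → X → X) (Φ : ℝ → ℝ → X → (V →L[ℝ] V))
    (hΦ : IsEvolutionCocycle φ Φ) :
    (∃ ν > (0:ℝ), ∃ a : ℕ → ℝ, (∀ n, 1 ≤ a n) ∧
      ∀ m n n₀ : ℕ, n₀ ≤ n → n ≤ m → ∀ (x : X) (v : V),
        ‖Φ n n₀ x v‖ ≤ a m * Real.exp (-ν * ((m : ℝ) - (n : ℝ))) * ‖Φ m n₀ x v‖) ↔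
    (∃ R : ℝ → ℝ, Monotone R ∧ R 0 = 0 ∧ (∀ t > (0:ℝ), 0 < R t) ∧
      ∃ ρ < (0:ℝ), ∃ α : ℕ → ℝ, (∀ n, 1 ≤ α n) ∧
        ∀ m n : ℕ, n ≤ m → ∀ (x : X) (v : V),
          ∑ k ∈ Finset.Icc n m,
              R (Real.exp (-ρ * ((m : ℝ) - (k : ℝ))) * ‖Φ k n x v‖) ≤
            R (α m * ‖Φ m n x v‖)) := by
  constructor
  · rintro ⟨ν, hν, a, ha, hinst⟩
    refine ⟨id, monotone_id, rfl, fun t ht => ht, -(ν / 2), by linarith,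
      fun m => a m * (1 - exp (ν / 2 - ν))⁻¹,
      fun m => one_le_mul_of_one_le_of_one_le (ha m) (one_le_inv_one_sub_exp (by linarith)),
      fun m n _ x v => ?_⟩
    simpa only [id, neg_neg] using sum_exp_mul_le_of_le_mul_exp (half_lt_self hν)
      (zero_le_one.trans (ha m)) (u := fun k => ‖Φ k n x v‖) (norm_nonneg _)
      fun k hk => hinst m k n (mem_Icc.1 hk).1 (mem_Icc.1 hk).2 x v
  · rintro ⟨R, hR, hR0, hRpos, ρ, hρ, α, hα, hsum⟩
    refine ⟨-ρ, neg_pos.2 hρ, α, hα, fun m n n₀ hn₀ hnm x v => ?_⟩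
    have hcocycle : ∀ k : ℕ, n ≤ k → Φ k n (φ n n₀ x) (Φ n n₀ x v) = Φ k n₀ x v :=
      fun k hk => hΦ.apply_apply n₀.cast_nonneg (mod_cast hn₀) (mod_cast hk) x v
    have hsum' := hsum m n hnm (φ n n₀ x) (Φ n n₀ x v)
    rw [sum_congr rfl fun k hk => by rw [hcocycle k (mem_Icc.1 hk).1], hcocycle m hnm] at hsum'
    exact le_mul_exp_of_sum_map_le hR hR0 hRpos (hα m) (fun k => norm_nonneg _) hnm hsum'

theorem discrete_instable_iff_R_sum
    {X V : Type*} [MetricSpace X] [NormedAddCommGroup V] [NormedSpace ℝ V] [CompleteSpace V]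
    (φ : ℝ → ℝ → X → X) (Φ : ℝ → ℝ → X → (V →L[ℝ] V))
    (hφ : IsEvolutionSemiflow φ) (hΦ : IsEvolutionCocycle φ Φ) :
    (∃ ν > (0:ℝ), ∃ a : ℕ → ℝ, (∀ n, 1 ≤ a n) ∧
      ∀ m n n₀ : ℕ, n₀ ≤ n → n ≤ m → ∀ (x : X) (v : V),
        ‖Φ n n₀ x v‖ ≤ a m * Real.exp (-ν * ((m : ℝ) - (n : ℝ))) * ‖Φ m n₀ x v‖) ↔
    (∃ R : ℝ → ℝ, Monotone R ∧ R 0 = 0 ∧ (∀ t > (0:ℝ), 0 < R t) ∧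
      ∃ ρ < (0:ℝ), ∃ α : ℕ → ℝ, (∀ n, 1 ≤ α n) ∧
        ∀ m n : ℕ, n ≤ m → ∀ (x : X) (v : V),
          ∑ k ∈ Finset.Icc n m,
              R (Real.exp (-ρ * ((m : ℝ) - (k : ℝ))) * ‖Φ k n x v‖) ≤
            R (α m * ‖Φ m n x v‖)) :=
  discrete_instable_iff_R_sum_general φ Φ hΦ
end

section
/- On X = ℝ₊ and V = ℝ² with norm ‖(v₁,v₂)‖ = |v₁| + |v₂|, the map Φ(t,s,x)(v₁,v₂) = (e^{t sin t - s sin s - 2t + 2s} v₁, e^{2t - 2s - 3t cos t + 3s cos s} v₂) is an evolution cocycle over every evolution semiflow φ, and with the projectors P₁(x)(v₁,v₂) = (v₁,0), P₂(x)(v₁,v₂) = (0,v₂), C = (φ,Φ) is exponentially dichotomic: ‖Φ(t,s,x)P₁(x)v‖ ≤ e^{2s} e^{-(t-s)} |v₁| and e^{6t} ‖Φ(t,s,x)P₂(x)v‖ ≥ e^{5(t-s)} |v₂| for all t ≥ s ≥ 0 and all (x,v). -/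
open Real Finset

/-- The cocycle of the dichotomy example on `V = ℝ × ℝ`. -/
noncomputable def PhiD : ℝ → ℝ → ℝ → ((ℝ × ℝ) →L[ℝ] (ℝ × ℝ)) :=
  fun t s _ =>
    (Real.exp (t * Real.sin t - s * Real.sin s - 2 * t + 2 * s) •
        ContinuousLinearMap.id ℝ ℝ).prodMap
      (Real.exp (2 * t - 2 * s - 3 * t * Real.cos t + 3 * s * Real.cos s) •
        ContinuousLinearMap.id ℝ ℝ)

lemma PhiD_apply (t s x : ℝ) (v : ℝ × ℝ) :
    PhiD t s x v =
      (Real.exp (t * Real.sin t - s * Real.sin s - 2 * t + 2 * s) * v.1,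
       Real.exp (2 * t - 2 * s - 3 * t * Real.cos t + 3 * s * Real.cos s) * v.2) := by
  simp [PhiD, Prod.map, smul_eq_mul]

theorem PhiD_cocycle_and_exp_dichotomic
    (φ : ℝ → ℝ → ℝ → ℝ) (hφ : IsEvolutionSemiflow φ) :
    IsEvolutionCocycle φ PhiD ∧
    ∀ t s : ℝ, 0 ≤ s → s ≤ t → ∀ (x : ℝ) (v : ℝ × ℝ),
      ‖PhiD t s x (v.1, 0)‖ ≤ Real.exp (2 * s) * Real.exp (-(t - s)) * |v.1| ∧
      Real.exp (5 * (t - s)) * |v.2| ≤ Real.exp (6 * t) * ‖PhiD t s x (0, v.2)‖ := by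
  constructor
  · constructor
    · intro t x _
      ext v <;> simp [PhiD_apply]
    · intro t s t₀ x _ _ _
      ext v <;>
        simp [PhiD_apply, ← Real.exp_add] <;> ring_nf
  · intro t s hs hst x v
    have ht : 0 ≤ t := hs.trans hst
    constructor
    · have hnorm : ‖PhiD t s x (v.1, 0)‖ =
          Real.exp (t * Real.sin t - s * Real.sin s - 2 * t + 2 * s) * |v.1| := by
        rw [PhiD_apply]
        simp [Prod.norm_def, abs_mul, Real.abs_exp]
        positivity
      rw [hnorm, ← Real.exp_add]
      apply mul_le_mul_of_nonneg_right _ (abs_nonneg _)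
      apply Real.exp_le_exp.2
      have h1 : t * Real.sin t ≤ t := by
        nlinarith [Real.sin_le_one t, Real.neg_one_le_sin t]
      have h2 : -(s * Real.sin s) ≤ s := by
        nlinarith [Real.sin_le_one s, Real.neg_one_le_sin s]
      linarith
    · have hnorm : ‖PhiD t s x (0, v.2)‖ =
          Real.exp (2 * t - 2 * s - 3 * t * Real.cos t + 3 * s * Real.cos s) * |v.2| := by
        rw [PhiD_apply]
        simp [Prod.norm_def, abs_mul, Real.abs_exp]
        positivity
      rw [hnorm, ← mul_assoc, ← Real.exp_add]
      apply mul_le_mul_of_nonneg_right _ (abs_nonneg _)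
      apply Real.exp_le_exp.2
      have h1 : -(3 * t * Real.cos t) ≥ -(3 * t) := by
        nlinarith [Real.cos_le_one t, Real.neg_one_le_cos t]
      have h2 : 3 * s * Real.cos s ≥ -(3 * s) := by
        nlinarith [Real.cos_le_one s, Real.neg_one_le_cos s]
      linarith
end
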